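/- arXiv:2405.10333 — 2 statements merged into one kernel-verified Lean document; each statement's English description precedes it below -/
import Mathlib

section
/- Let κ > 0, f ∈ ℂ, and let I : ℝ → ℝ satisfy 2i·I(s) = e^{iκs}·f − e^{−iκs}·conj(f) + E(s) where |E(s)| ≤ C/s for all s ≥ 1 and some constant C > 0. Then for fixed τ > 0 with sin(κτ) ≠ 0, the quantity (−e^{−iκ(s+τ)}·I(s) + e^{−iκs}·I(s+τ))/sin(κτ) converges to f as s → +∞, with error bounded by (2C/|sin(κτ)|)·(1/s) for s ≥ 1. -/
open Complex Filter

/-- two-point formula recovers f with O(1/s) error. -/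
theorem stmt2 (κ C τ : ℝ) (f : ℂ) (I : ℝ → ℝ) (E : ℝ → ℂ)
    (hκ : 0 < κ) (hC : 0 < C) (hτ : 0 < τ) (hsin : Real.sin (κ * τ) ≠ 0)
    (hrel : ∀ s : ℝ, 2 * Complex.I * (I s : ℂ) =
      Complex.exp (Complex.I * κ * s) * f -
        Complex.exp (-(Complex.I * κ * s)) * (starRingEnd ℂ) f + E s)
    (hE : ∀ s : ℝ, 1 ≤ s → ‖E s‖ ≤ C / s) :
    (∀ s : ℝ, 1 ≤ s →
      ‖(-Complex.exp (-(Complex.I * κ * (s + τ))) * (I s : ℂ) +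
          Complex.exp (-(Complex.I * κ * s)) * (I (s + τ) : ℂ)) / (Real.sin (κ * τ) : ℂ) - f‖
        ≤ (2 * C / |Real.sin (κ * τ)|) * (1 / s)) ∧
    Tendsto (fun s : ℝ =>
      (-Complex.exp (-(Complex.I * κ * (s + τ))) * (I s : ℂ) +
          Complex.exp (-(Complex.I * κ * s)) * (I (s + τ) : ℂ)) / (Real.sin (κ * τ) : ℂ))
      atTop (nhds f) := by
  have hs' : (Real.sin (κ * τ) : ℂ) ≠ 0 := by exact_mod_cast hsin
  have hsin2 : Complex.exp (Complex.I * κ * τ) - Complex.exp (-(Complex.I * κ * τ)) =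
      2 * Complex.I * (Real.sin (κ * τ) : ℂ) := by
    have e1 : Complex.I * (κ : ℂ) * (τ : ℂ) = ((κ : ℂ) * τ) * Complex.I := by ring
    have e2 : -(Complex.I * (κ : ℂ) * (τ : ℂ)) = (-((κ : ℂ) * τ)) * Complex.I := by ring
    rw [e2, e1, Complex.exp_mul_I, Complex.exp_mul_I, Complex.sin_neg, Complex.cos_neg,
      Complex.ofReal_sin]
    push_cast
    ring
  have habs1 : ∀ x : ℂ, x.im = 0 → ‖Complex.exp (-(Complex.I * κ * x))‖ = 1 := by
    intro x hx
    rw [Complex.norm_exp]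
    simp [Complex.mul_re, Complex.mul_im, hx]
  have key : ∀ s : ℝ,
      (-Complex.exp (-(Complex.I * κ * (s + τ))) * (I s : ℂ) +
          Complex.exp (-(Complex.I * κ * s)) * (I (s + τ) : ℂ)) / (Real.sin (κ * τ) : ℂ) - f =
      (-Complex.exp (-(Complex.I * κ * (s + τ))) * E s +
          Complex.exp (-(Complex.I * κ * s)) * E (s + τ)) /
        (2 * Complex.I * (Real.sin (κ * τ) : ℂ)) := by
    intro s
    have h1 := hrel s
    have h2 := hrel (s + τ)
    push_cast at h2
    have p1 : Complex.exp (-(Complex.I * κ * (s + τ))) * Complex.exp (Complex.I * κ * s) =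
        Complex.exp (-(Complex.I * κ * τ)) := by
      rw [← Complex.exp_add]; ring_nf
    have p4 : Complex.exp (-(Complex.I * κ * s)) * Complex.exp (Complex.I * κ * (s + τ)) =
        Complex.exp (Complex.I * κ * τ) := by
      rw [← Complex.exp_add]; ring_nf
    have main : 2 * Complex.I * (-Complex.exp (-(Complex.I * κ * (s + τ))) * (I s : ℂ) +
        Complex.exp (-(Complex.I * κ * s)) * (I (s + τ) : ℂ)) =
        2 * Complex.I * (Real.sin (κ * τ) : ℂ) * f +
        (-Complex.exp (-(Complex.I * κ * (s + τ))) * E s +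
          Complex.exp (-(Complex.I * κ * s)) * E (s + τ)) := by
      linear_combination (-Complex.exp (-(Complex.I * κ * (s + τ)))) * h1 +
        Complex.exp (-(Complex.I * κ * s)) * h2 + f * hsin2 + (-f) * p1 + f * p4
    have h2Iσ : (2 * Complex.I * (Real.sin (κ * τ) : ℂ)) ≠ 0 :=
      mul_ne_zero (mul_ne_zero two_ne_zero Complex.I_ne_zero) hs'
    rw [div_sub' hs', div_eq_div_iff hs' h2Iσ]
    linear_combination (Real.sin (κ * τ) : ℂ) * main
  have hbound : ∀ s : ℝ, 1 ≤ s →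
      ‖(-Complex.exp (-(Complex.I * κ * (s + τ))) * (I s : ℂ) +
          Complex.exp (-(Complex.I * κ * s)) * (I (s + τ) : ℂ)) / (Real.sin (κ * τ) : ℂ) - f‖
        ≤ (2 * C / |Real.sin (κ * τ)|) * (1 / s) := by
    intro s hs
    have hspos : 0 < s := lt_of_lt_of_le one_pos hs
    rw [key s, norm_div]
    have hnum : ‖-Complex.exp (-(Complex.I * κ * (s + τ))) * E s +
        Complex.exp (-(Complex.I * κ * s)) * E (s + τ)‖ ≤ 2 * C / s := by
      calc ‖-Complex.exp (-(Complex.I * κ * (s + τ))) * E s +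
          Complex.exp (-(Complex.I * κ * s)) * E (s + τ)‖
          ≤ ‖-Complex.exp (-(Complex.I * κ * (s + τ))) * E s‖ +
            ‖Complex.exp (-(Complex.I * κ * s)) * E (s + τ)‖ := by
            exact norm_add_le _ _
        _ = ‖E s‖ + ‖E (s + τ)‖ := by
            rw [norm_mul, norm_mul, norm_neg, habs1 _ (by simp), habs1 _ (by simp),
              one_mul, one_mul]
        _ ≤ C / s + C / (s + τ) := by
            gcongr
            · exact hE s hs
            · exact hE (s + τ) (by linarith)
        _ ≤ C / s + C / s := by
            gcongr
            linarith
        _ = 2 * C / s := by ring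
    have hden : ‖2 * Complex.I * (Real.sin (κ * τ) : ℂ)‖ =
        2 * |Real.sin (κ * τ)| := by
      rw [norm_mul, norm_mul, Complex.norm_I, Complex.norm_two, Complex.norm_real, Real.norm_eq_abs]
      ring
    rw [hden]
    have hσ : 0 < |Real.sin (κ * τ)| := abs_pos.mpr hsin
    rw [div_le_iff₀ (by positivity)]
    calc ‖-Complex.exp (-(Complex.I * κ * (s + τ))) * E s +
        Complex.exp (-(Complex.I * κ * s)) * E (s + τ)‖ ≤ 2 * C / s := hnum
      _ = (2 * C / |Real.sin (κ * τ)|) * (1 / s) * (2 * |Real.sin (κ * τ)|) / 2 := by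
          field_simp
      _ ≤ (2 * C / |Real.sin (κ * τ)|) * (1 / s) * (2 * |Real.sin (κ * τ)|) := by
          have h0 : 0 ≤ (2 * C / |Real.sin (κ * τ)|) * (1 / s) * (2 * |Real.sin (κ * τ)|) := by
            positivity
          linarith
  refine ⟨hbound, ?_⟩
  rw [tendsto_iff_norm_sub_tendsto_zero]
  apply squeeze_zero' (Eventually.of_forall fun s => norm_nonneg _)
    (eventually_atTop.mpr ⟨1, fun s hs => hbound s hs⟩)
  have hto := (tendsto_inv_atTop_zero (𝕜 := ℝ)).const_mul (2 * C / |Real.sin (κ * τ)|)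
  simpa [one_div] using hto
end

section
/- Let κ > 0 and let (f_j)_{j≥1} and (g_j)_{j≥1} be sequences of complex numbers such that the series Φ(s) = (e^{iκs}/s)·Σ_{j≥1} f_j/s^{j−1} and Ψ(s) = (e^{iκs}/s)·Σ_{j≥1} g_j/s^{j−1} both converge absolutely for all s ≥ r (some r > 0). If Im Φ(s) = Im Ψ(s) for all s ≥ r, then f_j = g_j for all j, and hence Φ = Ψ on [r, ∞). -/
open Complex Filter Topology


/-- abs summability implies summability in ℂ -/
lemma sumC (s : ℝ) (hs : 0 < s) (h : ℕ → ℂ)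
    (hsum : Summable (fun j : ℕ => ‖h j‖ / s ^ (j + 1))) :
    Summable (fun j : ℕ => h j / (s : ℂ) ^ (j + 1)) := by
  apply Summable.of_norm
  convert hsum using 2 with j
  simp [norm_div, norm_pow, abs_of_pos hs]

lemma base0 (κ r : ℝ) (hκ : 0 < κ) (hr : 0 < r) (h : ℕ → ℂ)
    (hsum : ∀ s : ℝ, r ≤ s → Summable (fun j : ℕ => ‖h j‖ / s ^ (j + 1)))
    (him : ∀ s : ℝ, r ≤ s →
      (Complex.exp (Complex.I * κ * s) * ∑' j : ℕ, h j / (s : ℂ) ^ (j + 1)).im = 0) :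
    h 0 = 0 := by
  set M : ℝ := ∑' j : ℕ, ‖h j‖ / r ^ (j + 1) with hM
  have hM0 : 0 ≤ M := tsum_nonneg fun j => by positivity
  have hcoef : ∀ j : ℕ, ‖h j‖ ≤ M * r ^ (j + 1) := by
    intro j
    have := Summable.le_tsum (hsum r le_rfl) j (fun k _ => by positivity)
    rw [div_le_iff₀ (by positivity)] at this
    linarith [this]
  -- key estimate
  have key : ∀ s : ℝ, 2 * r ≤ s →
      |Real.sin (κ * s) * (h 0).re + Real.cos (κ * s) * (h 0).im| ≤ 2 * M * r ^ 2 / s := by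
    intro s hs
    have hrs : r ≤ s := by linarith
    have hs0 : (0:ℝ) < s := by linarith
    have hsC : (s : ℂ) ≠ 0 := by exact_mod_cast hs0.ne'
    -- geometric bound on the tail
    have hx : r / s ≤ 1 / 2 := by rw [div_le_div_iff₀ hs0 (by norm_num)]; linarith
    have hx0 : 0 ≤ r / s := by positivity
    have hx1 : r / s < 1 := lt_of_le_of_lt hx (by norm_num)
    have hgeom : Summable (fun j : ℕ => M * (r / s) ^ (j + 2)) := by
      apply Summable.mul_left
      exact ((summable_geometric_of_lt_one hx0 hx1).mul_left ((r/s)^2)).congr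
        (fun j => by ring)
    have htail_norm : Summable (fun j : ℕ => ‖h (j + 1) / (s : ℂ) ^ (j + 2)‖) := by
      apply Summable.of_nonneg_of_le (fun j => norm_nonneg _) _ hgeom
      intro j
      have : ‖h (j+1) / (s:ℂ)^(j+2)‖ = ‖h (j+1)‖ / s ^ (j+2) := by
        simp [norm_div, norm_pow, abs_of_pos hs0]
      rw [this]
      rw [div_le_iff₀ (by positivity)]
      calc ‖h (j+1)‖ ≤ M * r ^ (j+2) := hcoef (j+1)
        _ = M * (r/s)^(j+2) * s^(j+2) := by rw [div_pow, mul_assoc, div_mul_cancel₀ _ (by positivity)]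
    have hRbound : ‖∑' j : ℕ, h (j + 1) / (s : ℂ) ^ (j + 2)‖ ≤ 2 * M * r ^ 2 / s ^ 2 := by
      calc ‖∑' j : ℕ, h (j + 1) / (s : ℂ) ^ (j + 2)‖
          ≤ ∑' j : ℕ, ‖h (j + 1) / (s : ℂ) ^ (j + 2)‖ := norm_tsum_le_tsum_norm htail_norm
        _ ≤ ∑' j : ℕ, M * (r / s) ^ (j + 2) := by
            apply Summable.tsum_le_tsum _ htail_norm hgeom
            intro j
            have : ‖h (j+1) / (s:ℂ)^(j+2)‖ = ‖h (j+1)‖ / s ^ (j+2) := by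
              simp [norm_div, norm_pow, abs_of_pos hs0]
            rw [this, div_le_iff₀ (by positivity)]
            calc ‖h (j+1)‖ ≤ M * r ^ (j+2) := hcoef (j+1)
              _ = M * (r/s)^(j+2) * s^(j+2) := by rw [div_pow, mul_assoc, div_mul_cancel₀ _ (by positivity)]
        _ = M * ((r/s)^2 * ∑' j : ℕ, (r/s)^j) := by
            rw [← tsum_mul_left, ← tsum_mul_left]
            congr 1; funext j; ring
        _ = M * ((r/s)^2 * (1 - r/s)⁻¹) := by rw [tsum_geometric_of_lt_one hx0 hx1]
        _ ≤ M * ((r/s)^2 * 2) := by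
            apply mul_le_mul_of_nonneg_left _ hM0
            apply mul_le_mul_of_nonneg_left _ (by positivity)
            rw [inv_le_comm₀ (by linarith) (by norm_num)]
            linarith
        _ = 2 * M * r ^ 2 / s ^ 2 := by field_simp
    -- split off the first term
    have hC : Summable (fun j : ℕ => h j / (s : ℂ) ^ (j + 1)) := sumC s hs0 h (hsum s hrs)
    have hsplit : (∑' j : ℕ, h j / (s : ℂ) ^ (j + 1))
        = h 0 / s + ∑' j : ℕ, h (j + 1) / (s : ℂ) ^ (j + 2) := by
      rw [Summable.tsum_eq_zero_add hC]
      norm_num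
    have h0 := him s hrs
    rw [hsplit, mul_add] at h0
    have him1 : (Complex.exp (Complex.I * κ * s) * (h 0 / s)).im
        = -(Complex.exp (Complex.I * κ * s) * ∑' j : ℕ, h (j + 1) / (s : ℂ) ^ (j + 2)).im := by
      have := h0
      simp only [Complex.add_im] at this
      linarith
    have hexp : Complex.exp (Complex.I * κ * s) = Complex.exp ((κ * s : ℝ) * Complex.I) := by
      congr 1; push_cast; ring
    have habs_exp : ‖Complex.exp (Complex.I * κ * s)‖ = 1 := by
      rw [hexp, Complex.norm_exp]
      simp
    -- compute the imaginary part of the main term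
    have hre : (Complex.exp (Complex.I * κ * s)).re = Real.cos (κ * s) := by
      rw [hexp, Complex.exp_ofReal_mul_I_re]
    have himexp : (Complex.exp (Complex.I * κ * s)).im = Real.sin (κ * s) := by
      rw [hexp, Complex.exp_ofReal_mul_I_im]
    have hmain : (Complex.exp (Complex.I * κ * s) * (h 0 / s)).im
        = (Real.sin (κ * s) * (h 0).re + Real.cos (κ * s) * (h 0).im) / s := by
      rw [Complex.mul_im]
      rw [show (h 0 / (s:ℝ)).im = (h 0).im / s from Complex.div_ofReal_im _ _]
      rw [show (h 0 / (s:ℝ)).re = (h 0).re / s from Complex.div_ofReal_re _ _]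
      rw [hre, himexp]
      ring
    have hbound2 : |(Complex.exp (Complex.I * κ * s) * ∑' j : ℕ, h (j + 1) / (s : ℂ) ^ (j + 2)).im|
        ≤ 2 * M * r ^ 2 / s ^ 2 := by
      calc |(Complex.exp (Complex.I * κ * s) * _).im|
          ≤ ‖Complex.exp (Complex.I * κ * s) * ∑' j : ℕ, h (j + 1) / (s : ℂ) ^ (j + 2)‖ :=
            Complex.abs_im_le_norm _
        _ = ‖∑' j : ℕ, h (j + 1) / (s : ℂ) ^ (j + 2)‖ := by
            rw [norm_mul, habs_exp, one_mul]
        _ ≤ 2 * M * r ^ 2 / s ^ 2 := hRbound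
    rw [hmain] at him1
    have : |(Real.sin (κ * s) * (h 0).re + Real.cos (κ * s) * (h 0).im) / s|
        ≤ 2 * M * r ^ 2 / s ^ 2 := by rw [him1, abs_neg]; exact hbound2
    rw [abs_div, abs_of_pos hs0, div_le_iff₀ hs0] at this
    calc |Real.sin (κ * s) * (h 0).re + Real.cos (κ * s) * (h 0).im|
        ≤ 2 * M * r ^ 2 / s ^ 2 * s := this
      _ = 2 * M * r ^ 2 / s := by
          field_simp
  -- conclude each component is zero
  have comp : ∀ θ : ℝ, (∀ n : ℕ, κ * ((θ + n * (2 * Real.pi)) / κ) = θ + n * (2 * Real.pi)) := by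
    intro θ n; field_simp
  have hzero : ∀ θ : ℝ, |Real.sin θ * (h 0).re + Real.cos θ * (h 0).im| ≤ 0 := by
    intro θ
    set sn : ℕ → ℝ := fun n => (θ + n * (2 * Real.pi)) / κ with hsn_def
    have hsn : Filter.Tendsto sn atTop atTop := by
      apply Filter.Tendsto.atTop_div_const hκ
      apply tendsto_atTop_add_const_left
      exact Filter.Tendsto.atTop_mul_const (by positivity) tendsto_natCast_atTop_atTop
    have hev : ∀ᶠ n : ℕ in atTop, |Real.sin θ * (h 0).re + Real.cos θ * (h 0).im|
        ≤ 2 * M * r ^ 2 / sn n := by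
      filter_upwards [hsn.eventually_ge_atTop (2 * r)] with n hn
      have := key (sn n) hn
      rwa [show κ * sn n = θ + n * (2 * Real.pi) from comp θ n,
        Real.sin_add_nat_mul_two_pi, Real.cos_add_nat_mul_two_pi] at this
    have hlim : Filter.Tendsto (fun n : ℕ => 2 * M * r ^ 2 / sn n) atTop (nhds 0) :=
      Filter.Tendsto.div_atTop tendsto_const_nhds hsn
    exact ge_of_tendsto hlim hev
  have hre0 : (h 0).re = 0 := by
    have := hzero (Real.pi / 2)
    rw [Real.sin_pi_div_two, Real.cos_pi_div_two] at this
    simp only [one_mul, zero_mul, add_zero] at this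
    exact abs_nonneg _ |>.antisymm this |>.symm ▸ (abs_eq_zero.mp (le_antisymm this (abs_nonneg _)))
  have him0 : (h 0).im = 0 := by
    have := hzero 0
    rw [Real.sin_zero, Real.cos_zero] at this
    simp only [one_mul, zero_mul, zero_add] at this
    exact abs_eq_zero.mp (le_antisymm this (abs_nonneg _))
  exact Complex.ext hre0 him0

lemma keyall (κ r : ℝ) (hκ : 0 < κ) (hr : 0 < r) :
    ∀ j : ℕ, ∀ h : ℕ → ℂ,
      (∀ s : ℝ, r ≤ s → Summable (fun j : ℕ => ‖h j‖ / s ^ (j + 1))) →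
      (∀ s : ℝ, r ≤ s →
        (Complex.exp (Complex.I * κ * s) * ∑' j : ℕ, h j / (s : ℂ) ^ (j + 1)).im = 0) →
      h j = 0 := by
  intro j
  induction j with
  | zero => exact fun h hs him => base0 κ r hκ hr h hs him
  | succ j ih =>
    intro h hs him
    have h0 : h 0 = 0 := base0 κ r hκ hr h hs him
    refine ih (fun k => h (k + 1)) ?_ ?_
    · intro s hrs
      have hs0 : (0:ℝ) < s := lt_of_lt_of_le hr hrs
      have h1 : Summable (fun k : ℕ => ‖h (k + 1)‖ / s ^ (k + 1 + 1)) :=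
        (summable_nat_add_iff (f := fun j : ℕ => ‖h j‖ / s ^ (j + 1)) 1).mpr (hs s hrs)
      apply (h1.mul_left s).congr
      intro k
      rw [pow_succ]
      field_simp
    · intro s hrs
      have hs0 : (0:ℝ) < s := lt_of_lt_of_le hr hrs
      have hsC : (s : ℂ) ≠ 0 := by exact_mod_cast hs0.ne'
      have hC : Summable (fun k : ℕ => h k / (s : ℂ) ^ (k + 1)) :=
        sumC s hs0 h (hs s hrs)
      have hC' : Summable (fun k : ℕ => h k / (s : ℂ) ^ k) := by
        apply (hC.mul_left (s:ℂ)).congr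
        intro k
        rw [pow_succ]
        field_simp
      have e1 : (s : ℂ) * ∑' k : ℕ, h k / (s : ℂ) ^ (k + 1) = ∑' k : ℕ, h k / (s : ℂ) ^ k := by
        rw [← tsum_mul_left]
        exact tsum_congr fun k => by rw [pow_succ]; field_simp
      have e2 : ∑' k : ℕ, h k / (s : ℂ) ^ k
          = h 0 / (s:ℂ) ^ 0 + ∑' k : ℕ, h (k + 1) / (s : ℂ) ^ (k + 1) :=
        Summable.tsum_eq_zero_add hC'
      have e3 : ∑' k : ℕ, h (k + 1) / (s : ℂ) ^ (k + 1)
          = (s : ℂ) * ∑' k : ℕ, h k / (s : ℂ) ^ (k + 1) := by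
        rw [e1, e2, h0]
        simp
      rw [e3]
      rw [show Complex.exp (Complex.I * κ * s) * ((s:ℂ) * ∑' k : ℕ, h k / (s : ℂ) ^ (k + 1))
          = (s:ℂ) * (Complex.exp (Complex.I * κ * s) * ∑' k : ℕ, h k / (s : ℂ) ^ (k + 1)) by ring]
      rw [Complex.im_ofReal_mul _ _, him s hrs, mul_zero]

/-- on a ray, the imaginary part of an Atkinson–Wilcox type expansion
determines all coefficients, hence the whole function. -/
theorem stmt8 (κ r : ℝ) (hκ : 0 < κ) (hr : 0 < r) (f g : ℕ → ℂ)
    (hf : ∀ s : ℝ, r ≤ s → Summable (fun j : ℕ => ‖f j‖ / s ^ (j + 1)))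
    (hg : ∀ s : ℝ, r ≤ s → Summable (fun j : ℕ => ‖g j‖ / s ^ (j + 1)))
    (Φ Ψ : ℝ → ℂ)
    (hΦ : ∀ s : ℝ, Φ s = Complex.exp (Complex.I * κ * s) * ∑' j : ℕ, f j / (s : ℂ) ^ (j + 1))
    (hΨ : ∀ s : ℝ, Ψ s = Complex.exp (Complex.I * κ * s) * ∑' j : ℕ, g j / (s : ℂ) ^ (j + 1))
    (him : ∀ s : ℝ, r ≤ s → (Φ s).im = (Ψ s).im) :
    (∀ j : ℕ, f j = g j) ∧ (∀ s : ℝ, r ≤ s → Φ s = Ψ s) := by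
  have hdiff : ∀ j : ℕ, f j - g j = 0 := by
    intro j
    apply keyall κ r hκ hr j (fun j => f j - g j)
    · intro s hrs
      have hs0 : (0:ℝ) < s := lt_of_lt_of_le hr hrs
      apply Summable.of_nonneg_of_le (fun j => by positivity) _ ((hf s hrs).add (hg s hrs))
      intro j
      rw [← add_div]
      gcongr
      simpa using norm_sub_le (f j) (g j)
    · intro s hrs
      have hs0 : (0:ℝ) < s := lt_of_lt_of_le hr hrs
      have hfc : Summable (fun j : ℕ => f j / (s : ℂ) ^ (j + 1)) := sumC s hs0 f (hf s hrs)
      have hgc : Summable (fun j : ℕ => g j / (s : ℂ) ^ (j + 1)) := sumC s hs0 g (hg s hrs)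
      have e : ∑' j : ℕ, (f j - g j) / (s : ℂ) ^ (j + 1)
          = (∑' j : ℕ, f j / (s : ℂ) ^ (j + 1)) - ∑' j : ℕ, g j / (s : ℂ) ^ (j + 1) := by
        rw [← Summable.tsum_sub hfc hgc]
        exact tsum_congr fun j => by ring
      rw [e, mul_sub, Complex.sub_im, ← hΦ, ← hΨ, him s hrs, sub_self]
  refine ⟨fun j => sub_eq_zero.mp (hdiff j), fun s hrs => ?_⟩
  rw [hΦ, hΨ]
  congr 1
  exact tsum_congr fun j => by rw [sub_eq_zero.mp (hdiff j)]
end
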